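/- An edge contraction T_c of a tree T is dendrogram-lineage-preserving (ancestry among surviving edges coincides in the dendrograms of T and T_c) if and only if for every pair of surviving edges e_i, e_j, the lowest common dendrogram ancestor of e_i and e_j in T is itself a surviving edge of T_c. -/

import Mathlib

open SimpleGraph

variable {V : Type*}

/-- The set of edges lying on the (unique) path between the edges `e` and `f`
of a tree `G`: the edges that belong to every walk traversing both `e` and
`f` (inclusive of `e` and `f` themselves). -/
def betweenEdges (G : SimpleGraph V) (e f : Sym2 V) : Set (Sym2 V) :=
  {g | g ∈ G.edgeSet ∧
    ∀ (a b : V) (p : G.Walk a b), e ∈ p.edges → f ∈ p.edges → g ∈ p.edges}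

/-- `f` is an ancestor of `e` (each edge being an ancestor of itself) in the
single-linkage dendrogram of the weighted tree `(G, w)`, built top-down by
recursively removing the heaviest edge of each connected component:
equivalently, `f` is the heaviest edge on the path between `e` and `f`. -/
def IsAncestor (G : SimpleGraph V) (w : Sym2 V → ℝ) (f e : Sym2 V) : Prop :=
  e ∈ G.edgeSet ∧ f ∈ G.edgeSet ∧ ∀ g ∈ betweenEdges G e f, w g ≤ w f

/-- `m` is the lowest common dendrogram ancestor (LCDA) of edges `e` and `f`:
the deepest node of the dendrogram that is an ancestor of both. -/
def IsLCDA (G : SimpleGraph V) (w : Sym2 V → ℝ) (m e f : Sym2 V) : Prop :=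
  IsAncestor G w m e ∧ IsAncestor G w m f ∧
    ∀ g, IsAncestor G w g e → IsAncestor G w g f → IsAncestor G w g m

/-- The equivalence on vertices generated by identifying the endpoints of each
contracted edge (the edges of `G` belonging to `S`). -/
def contractSetoid (G : SimpleGraph V) (S : Set (Sym2 V)) : Setoid V :=
  ⟨Relation.EqvGen (fun u v => G.Adj u v ∧ s(u, v) ∈ S),
    Relation.EqvGen.is_equivalence _⟩

/-- The tree obtained from `G` by contracting the edges in `S`: the surviving
edges are the edges of `G` not in `S`, viewed between the merged
supervertices. -/
def contractGraph (G : SimpleGraph V) (S : Set (Sym2 V)) :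
    SimpleGraph (Quotient (contractSetoid G S)) where
  Adj x y := x ≠ y ∧ ∃ u v : V, Quotient.mk (contractSetoid G S) u = x ∧
      Quotient.mk (contractSetoid G S) v = y ∧ G.Adj u v ∧ s(u, v) ∉ S
  symm := ⟨by
    rintro x y ⟨hxy, u, v, hu, hv, hadj, hS⟩
    exact ⟨hxy.symm, v, u, hv, hu, hadj.symm, by rwa [Sym2.eq_swap]⟩⟩
  loopless := ⟨fun x h => h.1 rfl⟩

/-- The image of an edge of `G` in the contracted tree. -/
def contractEdge (G : SimpleGraph V) (S : Set (Sym2 V)) :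
    Sym2 V → Sym2 (Quotient (contractSetoid G S)) :=
  Sym2.map (Quotient.mk (contractSetoid G S))

/-! The path in `T_c` between two surviving edges is the image of the surviving edges on
their path in `T`, so a surviving edge is an ancestor in `T_c` exactly when it is the heaviest
*surviving* edge on the path, while the LCDA of `e_i` and `e_j` is the heaviest edge on their
path. If the LCDA survives, the two notions of "heaviest" agree. Conversely, the heaviest
surviving edge `h` on the path between `e_i` and `e_j` is an ancestor of both in `T_c`; if
lineage is preserved it is an ancestor of both in `T`, which makes `h` the LCDA. -/

section BetweenEdges

variable {G : SimpleGraph V}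

theorem betweenEdges_comm (e f : Sym2 V) : betweenEdges G e f = betweenEdges G f e := by
  ext g
  exact and_congr_right fun _ => forall₃_congr fun _ _ _ => imp.swap

theorem mem_betweenEdges_left {e f : Sym2 V} (he : e ∈ G.edgeSet) : e ∈ betweenEdges G e f :=
  ⟨he, fun _ _ _ h _ => h⟩

theorem betweenEdges_left_subset_of_mem {e f g : Sym2 V} (hg : g ∈ betweenEdges G e f) :
    betweenEdges G e g ⊆ betweenEdges G e f :=
  fun _ ⟨hx, h⟩ => ⟨hx, fun a b p he hf => h a b p he (hg.2 a b p he hf)⟩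

theorem betweenEdges_right_subset_of_mem {e f g : Sym2 V} (hg : g ∈ betweenEdges G e f) :
    betweenEdges G f g ⊆ betweenEdges G e f := by
  rw [betweenEdges_comm e f] at hg ⊢
  exact betweenEdges_left_subset_of_mem hg

theorem SimpleGraph.Walk.exists_walk_edges_iff_of_mem_support {u v x : V} (p : G.Walk u v)
    (hx : x ∈ p.support) : ∃ q : G.Walk u x, ∀ e, e ∈ q.edges ↔ e ∈ p.edges := by
  classical
  have hx' : x ∈ p.reverse.support := by simpa using hx
  refine ⟨p.append (p.reverse.takeUntil x hx'), fun e => ⟨fun he => ?_, fun he => ?_⟩⟩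
  · rw [Walk.edges_append, List.mem_append] at he
    refine he.elim id fun he => ?_
    simpa using p.reverse.edges_takeUntil_subset_edges hx' he
  · simp [Walk.edges_append, he]

theorem betweenEdges_subset_union (a b c : Sym2 V) :
    betweenEdges G a b ⊆ betweenEdges G a c ∪ betweenEdges G c b := by
  induction c using Sym2.ind with | _ c₁ c₂ =>
  intro x hx
  by_contra hxc
  simp only [betweenEdges, Set.mem_union, Set.mem_ofPred_eq, hx.1, true_and, not_or,
    not_forall] at hxc
  obtain ⟨⟨u₁, v₁, p, hap, hcp, hxp⟩, ⟨u₂, v₂, q, hcq, hbq, hxq⟩⟩ := hxc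
  obtain ⟨p', hp'⟩ := p.exists_walk_edges_iff_of_mem_support (p.fst_mem_support_of_mem_edges hcp)
  obtain ⟨q', hq'⟩ := q.reverse.exists_walk_edges_iff_of_mem_support
    (by simpa using q.fst_mem_support_of_mem_edges hcq)
  -- glue `p` and `q` at the endpoint `c₁` of `c`, using no edge outside `p` and `q`
  have hW : ∀ e, e ∈ (p'.append q'.reverse).edges ↔ e ∈ p.edges ∨ e ∈ q.edges := by
    simp [Walk.edges_append, hp', hq']
  rcases (hW x).1 (hx.2 _ _ _ ((hW a).2 (.inl hap)) ((hW b).2 (.inr hbq))) with h | h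
  exacts [hxp h, hxq h]

theorem exists_walk_mem_edges_of_connected (hG : G.Connected) {e f : Sym2 V}
    (he : e ∈ G.edgeSet) (hf : f ∈ G.edgeSet) :
    ∃ (u v : V) (p : G.Walk u v), e ∈ p.edges ∧ f ∈ p.edges := by
  induction e using Sym2.ind with | _ a b =>
  induction f using Sym2.ind with | _ c d =>
  obtain ⟨p⟩ := hG.preconnected a c
  have hab : G.Adj a b := he
  have hcd : G.Adj c d := hf
  refine ⟨b, d, (Walk.cons hab.symm p).concat hcd, ?_, ?_⟩ <;>
    rw [Walk.edges_concat, Walk.edges_cons] <;> simp [Sym2.eq_swap]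

theorem betweenEdges_finite (hG : G.Connected) {e f : Sym2 V} (he : e ∈ G.edgeSet)
    (hf : f ∈ G.edgeSet) : (betweenEdges G e f).Finite := by
  obtain ⟨u, v, p, hep, hfp⟩ := exists_walk_mem_edges_of_connected hG he hf
  exact p.edges.finite_toSet.subset fun g hg => hg.2 u v p hep hfp

end BetweenEdges

section Dendrogram

variable {G : SimpleGraph V} {w : Sym2 V → ℝ}

theorem IsAncestor.le_of_mem_betweenEdges {e f g h : Sym2 V} (he : IsAncestor G w h e)
    (hf : IsAncestor G w h f) (hg : g ∈ betweenEdges G e f) : w g ≤ w h := by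
  rcases betweenEdges_subset_union e f h hg with hg | hg
  · exact he.2.2 g hg
  · exact hf.2.2 g (betweenEdges_comm h f ▸ hg)

theorem isLCDA_of_forall_le {e f m : Sym2 V} (he : e ∈ G.edgeSet) (hf : f ∈ G.edgeSet)
    (hm : m ∈ betweenEdges G e f) (hmax : ∀ g ∈ betweenEdges G e f, w g ≤ w m) :
    IsLCDA G w m e f := by
  refine ⟨⟨he, hm.1, fun g hg => hmax g (betweenEdges_left_subset_of_mem hm hg)⟩,
    ⟨hf, hm.1, fun g hg => hmax g (betweenEdges_right_subset_of_mem hm hg)⟩,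
    fun g hge hgf => ⟨hm.1, hge.2.1, fun x hx => ?_⟩⟩
  rcases betweenEdges_subset_union m g e hx with hx | hx
  · rw [betweenEdges_comm] at hx
    exact hge.le_of_mem_betweenEdges hgf (betweenEdges_left_subset_of_mem hm hx)
  · exact hge.2.2 x hx

theorem IsLCDA.unique (hw : Set.InjOn w G.edgeSet) {e f g m : Sym2 V}
    (hg : IsLCDA G w g e f) (hm : IsLCDA G w m e f) : g = m :=
  have hgm := hm.2.2 g hg.1 hg.2.1
  have hmg := hg.2.2 m hm.1 hm.2.1
  hw hgm.2.1 hgm.1 <| le_antisymm (hmg.2.2 g (mem_betweenEdges_left hmg.1))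
    (hgm.2.2 m (mem_betweenEdges_left hgm.1))

end Dendrogram

section Contraction

variable {G : SimpleGraph V} {S : Set (Sym2 V)}

theorem SimpleGraph.IsAcyclic.mem_edges_of_adj (hG : G.IsAcyclic) {u v : V} (h : G.Adj u v)
    (p : G.Walk u v) : s(u, v) ∈ p.edges :=
  isBridge_iff_forall_walk_mem_edges.1 (isAcyclic_iff_forall_isBridge.1 hG h) p

theorem exists_walk_of_mk_eq_mk {u v : V}
    (h : Quotient.mk (contractSetoid G S) u = Quotient.mk (contractSetoid G S) v) :
    ∃ p : G.Walk u v, ∀ e ∈ p.edges, e ∈ S := by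
  have h' : Relation.EqvGen _ u v := Quotient.exact h
  clear h
  induction h' with
  | rel a b hab => exact ⟨.cons hab.1 .nil, by simp [hab.2]⟩
  | refl a => exact ⟨.nil, by simp⟩
  | symm a b _ ih =>
    obtain ⟨p, hp⟩ := ih
    exact ⟨p.reverse, by simpa using hp⟩
  | trans a b c _ _ ih₁ ih₂ =>
    obtain ⟨p, hp⟩ := ih₁
    obtain ⟨q, hq⟩ := ih₂
    exact ⟨p.append q, by simpa [Walk.edges_append, or_imp, forall_and] using ⟨hp, hq⟩⟩

theorem mk_ne_mk_of_adj (hG : G.IsAcyclic) {u v : V} (h : G.Adj u v) (hS : s(u, v) ∉ S) :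
    Quotient.mk (contractSetoid G S) u ≠ Quotient.mk (contractSetoid G S) v := fun huv =>
  have ⟨p, hp⟩ := exists_walk_of_mk_eq_mk huv
  hS (hp _ (hG.mem_edges_of_adj h p))

theorem contractEdge_mem_edgeSet (hG : G.IsAcyclic) {e : Sym2 V} (he : e ∈ G.edgeSet)
    (hS : e ∉ S) : contractEdge G S e ∈ (contractGraph G S).edgeSet := by
  induction e using Sym2.ind with | _ u v =>
  exact ⟨mk_ne_mk_of_adj hG he hS, u, v, rfl, rfl, he, hS⟩

theorem exists_eq_contractEdge {h : Sym2 (Quotient (contractSetoid G S))}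
    (hh : h ∈ (contractGraph G S).edgeSet) :
    ∃ g ∈ G.edgeSet, g ∉ S ∧ contractEdge G S g = h := by
  induction h using Sym2.ind with | _ x y =>
  obtain ⟨-, u, v, rfl, rfl, huv, hS⟩ := hh
  exact ⟨s(u, v), huv, hS, rfl⟩

theorem eq_of_mk_eq_mk_of_mk_eq_mk (hG : G.IsAcyclic) {a b u v : V} (hab : G.Adj a b)
    (hS : s(a, b) ∉ S) (huv : G.Adj u v)
    (hau : Quotient.mk (contractSetoid G S) a = Quotient.mk (contractSetoid G S) u)
    (hbv : Quotient.mk (contractSetoid G S) b = Quotient.mk (contractSetoid G S) v) :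
    s(a, b) = s(u, v) := by
  obtain ⟨p, hp⟩ := exists_walk_of_mk_eq_mk hau
  obtain ⟨q, hq⟩ := exists_walk_of_mk_eq_mk hbv.symm
  have hmem := hG.mem_edges_of_adj hab (p.append (.cons huv q))
  simp only [Walk.edges_append, Walk.edges_cons, List.mem_append, List.mem_cons] at hmem
  rcases hmem with h | h | h
  exacts [absurd (hp _ h) hS, h, absurd (hq _ h) hS]

theorem contractEdge_injOn (hG : G.IsAcyclic) :
    Set.InjOn (contractEdge G S) (G.edgeSet \ S) := by
  rintro e ⟨he, heS⟩ f ⟨hf, -⟩ hef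
  induction e using Sym2.ind with | _ a b =>
  induction f using Sym2.ind with | _ u v =>
  rcases Sym2.eq_iff.1 hef with ⟨h₁, h₂⟩ | ⟨h₁, h₂⟩
  · exact eq_of_mk_eq_mk_of_mk_eq_mk hG he heS hf h₁ h₂
  · exact (eq_of_mk_eq_mk_of_mk_eq_mk hG he heS hf.symm h₁ h₂).trans Sym2.eq_swap

section Walks

variable [DecidablePred (· ∈ S)]

theorem exists_contractGraph_walk (hG : G.IsAcyclic) {u v : V} (p : G.Walk u v) :
    ∃ q : (contractGraph G S).Walk (Quotient.mk _ u) (Quotient.mk _ v),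
      q.edges = (p.edges.filter (· ∉ S)).map (contractEdge G S) := by
  induction p with
  | nil => exact ⟨.nil, rfl⟩
  | @cons a b c hab p ih =>
    obtain ⟨q, hq⟩ := ih
    by_cases hS : s(a, b) ∈ S
    · refine ⟨q.copy (Quotient.sound (Relation.EqvGen.rel _ _ ⟨hab, hS⟩)).symm rfl, ?_⟩
      rw [Walk.edges_copy, hq, Walk.edges_cons, List.filter_cons_of_neg (by simpa using hS)]
    · have hadj : (contractGraph G S).Adj (Quotient.mk _ a) (Quotient.mk _ b) :=
        ⟨mk_ne_mk_of_adj hG hab hS, a, b, rfl, rfl, hab, hS⟩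
      refine ⟨.cons hadj q, ?_⟩
      rw [Walk.edges_cons, Walk.edges_cons, hq, List.filter_cons_of_pos (by simpa using hS),
        List.map_cons]
      rfl

theorem exists_walk_of_contractGraph_walk {x y : Quotient (contractSetoid G S)}
    (q : (contractGraph G S).Walk x y) :
    ∃ p : G.Walk x.out y.out, q.edges = (p.edges.filter (· ∉ S)).map (contractEdge G S) := by
  induction q with
  | nil => exact ⟨.nil, rfl⟩
  | @cons x z y hxz q ih =>
    obtain ⟨p, hp⟩ := ih
    obtain ⟨-, u, v, hu, hv, huv, hS⟩ := id hxz
    obtain ⟨p₁, hp₁⟩ := exists_walk_of_mk_eq_mk ((Quotient.out_eq x).trans hu.symm)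
    obtain ⟨p₂, hp₂⟩ := exists_walk_of_mk_eq_mk (hv.trans (Quotient.out_eq z).symm)
    refine ⟨p₁.append (.cons huv (p₂.append p)), ?_⟩
    have h₁ : p₁.edges.filter (· ∉ S) = [] := by simpa [List.filter_eq_nil_iff] using hp₁
    have h₂ : p₂.edges.filter (· ∉ S) = [] := by simpa [List.filter_eq_nil_iff] using hp₂
    rw [Walk.edges_cons, hp, Walk.edges_append, Walk.edges_cons, Walk.edges_append,
      List.filter_append, h₁, List.filter_cons_of_pos (by simpa using hS), List.filter_append, h₂,
      List.nil_append, List.nil_append, List.map_cons, contractEdge, Sym2.map_mk, hu, hv]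

theorem contractEdge_mem_edges_iff (hG : G.IsAcyclic) {u v : V}
    {x y : Quotient (contractSetoid G S)} {p : G.Walk u v} {q : (contractGraph G S).Walk x y}
    (hpq : q.edges = (p.edges.filter (· ∉ S)).map (contractEdge G S)) {e : Sym2 V}
    (he : e ∈ G.edgeSet) (heS : e ∉ S) : contractEdge G S e ∈ q.edges ↔ e ∈ p.edges := by
  rw [hpq, List.mem_map]
  refine ⟨fun ⟨f, hf, hfe⟩ => ?_, fun hep => ⟨e, List.mem_filter.2 ⟨hep, by simpa⟩, rfl⟩⟩
  rw [List.mem_filter, decide_eq_true_iff] at hf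
  exact contractEdge_injOn hG ⟨p.edges_subset_edgeSet hf.1, hf.2⟩ ⟨he, heS⟩ hfe ▸ hf.1

end Walks

theorem betweenEdges_contractGraph (hG : G.IsAcyclic) {e f : Sym2 V} (he : e ∈ G.edgeSet)
    (hf : f ∈ G.edgeSet) (heS : e ∉ S) (hfS : f ∉ S) :
    betweenEdges (contractGraph G S) (contractEdge G S e) (contractEdge G S f) =
      contractEdge G S '' (betweenEdges G e f \ S) := by
  classical
  ext h
  constructor
  · rintro ⟨hh, hbetween⟩
    obtain ⟨g, hg, hgS, rfl⟩ := exists_eq_contractEdge hh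
    refine ⟨g, ⟨⟨hg, fun a b p hep hfp => ?_⟩, hgS⟩, rfl⟩
    obtain ⟨q, hq⟩ := exists_contractGraph_walk (S := S) hG p
    have hiff := fun {g} => contractEdge_mem_edges_iff hG hq (e := g)
    exact (hiff hg hgS).1 (hbetween _ _ q ((hiff he heS).2 hep) ((hiff hf hfS).2 hfp))
  · rintro ⟨g, ⟨⟨hg, hbetween⟩, hgS⟩, rfl⟩
    refine ⟨contractEdge_mem_edgeSet hG hg hgS, fun x y q heq hfq => ?_⟩
    obtain ⟨p, hp⟩ := exists_walk_of_contractGraph_walk q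
    have hiff := fun {g} => contractEdge_mem_edges_iff hG hp (e := g)
    exact (hiff hg hgS).2 (hbetween _ _ p ((hiff he heS).1 heq) ((hiff hf hfS).1 hfq))

theorem isAncestor_contractGraph_iff (hG : G.IsAcyclic) {w : Sym2 V → ℝ}
    {w' : Sym2 (Quotient (contractSetoid G S)) → ℝ}
    (hw' : ∀ e ∈ G.edgeSet, e ∉ S → w' (contractEdge G S e) = w e) {e f : Sym2 V}
    (he : e ∈ G.edgeSet) (hf : f ∈ G.edgeSet) (heS : e ∉ S) (hfS : f ∉ S) :
    IsAncestor (contractGraph G S) w' (contractEdge G S f) (contractEdge G S e) ↔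
      ∀ g ∈ betweenEdges G e f \ S, w g ≤ w f := by
  simp only [IsAncestor, betweenEdges_contractGraph hG he hf heS hfS, Set.forall_mem_image,
    contractEdge_mem_edgeSet hG he heS, contractEdge_mem_edgeSet hG hf hfS, true_and]
  exact forall₂_congr fun g hg => by rw [hw' g hg.1.1 hg.2, hw' f hf hfS]

end Contraction

theorem lineage_preserving_iff_lcda_closed_general (G : SimpleGraph V) (hG : G.IsTree)
    (w : Sym2 V → ℝ) (hw : Set.InjOn w G.edgeSet)
    (S : Set (Sym2 V))
    (w' : Sym2 (Quotient (contractSetoid G S)) → ℝ)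
    (hw' : ∀ e ∈ G.edgeSet, e ∉ S → w' (contractEdge G S e) = w e) :
    (∀ ei ej, ei ∈ G.edgeSet → ej ∈ G.edgeSet → ei ∉ S → ej ∉ S →
        (IsAncestor (contractGraph G S) w' (contractEdge G S ei)
            (contractEdge G S ej) ↔
          IsAncestor G w ei ej)) ↔
      (∀ ei ej, ei ∈ G.edgeSet → ej ∈ G.edgeSet → ei ∉ S → ej ∉ S →
        ∀ g, IsLCDA G w g ei ej → g ∉ S) := by
  have hcontract := fun {e f} => isAncestor_contractGraph_iff hG.isAcyclic hw' (e := e) (f := f)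
  constructor
  · intro hLP ei ej hi hj hsi hsj g hg
    obtain ⟨h, ⟨hh, hhS⟩, hmax⟩ := Set.exists_max_image _ w
      (betweenEdges_finite hG.connected hi hj).sdiff ⟨ei, mem_betweenEdges_left hi, hsi⟩
    have hAncestor : ∀ e ∈ G.edgeSet, e ∉ S → betweenEdges G e h ⊆ betweenEdges G ei ej →
        IsAncestor G w h e := fun e he heS hsub =>
      (hLP h e hh.1 he hhS heS).1 <|
        (hcontract he hh.1 heS hhS).2 fun x hx => hmax x ⟨hsub hx.1, hx.2⟩
    have hLCDA : IsLCDA G w h ei ej := isLCDA_of_forall_le hi hj hh fun _ =>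
      (hAncestor ei hi hsi (betweenEdges_left_subset_of_mem hh)).le_of_mem_betweenEdges
        (hAncestor ej hj hsj (betweenEdges_right_subset_of_mem hh))
    exact hg.unique hw hLCDA ▸ hhS
  · intro hC ei ej hi hj hsi hsj
    obtain ⟨m, hm, hmax⟩ := Set.exists_max_image _ w
      (betweenEdges_finite hG.connected hi hj) ⟨ei, mem_betweenEdges_left hi⟩
    have hmS : m ∉ S := hC ei ej hi hj hsi hsj m (isLCDA_of_forall_le hi hj hm hmax)
    rw [betweenEdges_comm] at hm hmax
    rw [hcontract hj hi hsj hsi]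
    exact ⟨fun h => ⟨hj, hi, fun g hg => (hmax g hg).trans (h m ⟨hm, hmS⟩)⟩,
      fun h g hg => h.2.2 g hg.1⟩

/-- An edge contraction `T_c` of a tree `T` with distinct edge weights is
dendrogram-lineage-preserving (ancestry among surviving edges coincides in the
dendrograms of `T` and `T_c`) if and only if for every pair of surviving edges
`e_i`, `e_j`, the lowest common dendrogram ancestor of `e_i` and `e_j` in `T`
is itself a surviving edge. -/
theorem lineage_preserving_iff_lcda_closed (G : SimpleGraph V) (hG : G.IsTree)
    (w : Sym2 V → ℝ) (hw : Set.InjOn w G.edgeSet)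
    (S : Set (Sym2 V)) (hS : S ⊆ G.edgeSet)
    (w' : Sym2 (Quotient (contractSetoid G S)) → ℝ)
    (hw' : ∀ e ∈ G.edgeSet, e ∉ S → w' (contractEdge G S e) = w e) :
    (∀ ei ej, ei ∈ G.edgeSet → ej ∈ G.edgeSet → ei ∉ S → ej ∉ S →
        (IsAncestor (contractGraph G S) w' (contractEdge G S ei)
            (contractEdge G S ej) ↔
          IsAncestor G w ei ej)) ↔
      (∀ ei ej, ei ∈ G.edgeSet → ej ∈ G.edgeSet → ei ∉ S → ej ∉ S →
        ∀ g, IsLCDA G w g ei ej → g ∉ S) :=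
  lineage_preserving_iff_lcda_closed_general G hG w hw S w' hw'
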